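/- arXiv:2101.11982 — 2 statements merged into one kernel-verified Lean document; each statement's English description precedes it below -/
import Mathlib

section
/- Assume in addition that each V_i is finite-dimensional over F. Then every nonzero φ ∈ grend_{L,0}(V) is bijective and its inverse again belongs to grend_{L,0}(V); hence grend_{L,0}(V) is a division ring containing the scalar multiplications by elements of F in its centre. -/
open Submodule

/-- `L` is a Lie algebra graded over the positive integers and generated by `L_1`. -/
structure IsGradedLieAlgebra (F : Type*) [Field F] (L : Type*) [LieRing L] [LieAlgebra F L]
    (Lc : ℕ → Submodule F L) : Prop where
  zero_bot : Lc 0 = ⊥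
  internal : DirectSum.IsInternal Lc
  lie_mem : ∀ i j : ℕ, ∀ x ∈ Lc i, ∀ y ∈ Lc j, ⁅x, y⁆ ∈ Lc (i + j)
  gen : LieSubalgebra.lieSpan F L (Lc 1 : Set L) = ⊤

/-- `V = ⊕_{i ≥ n₀} V_i` is a graded `L`-module. -/
structure IsGradedLieModule (F : Type*) [Field F] (L : Type*) [LieRing L] [LieAlgebra F L]
    (Lc : ℕ → Submodule F L)
    (V : Type*) [AddCommGroup V] [Module F V] [LieRingModule L V] [LieModule F L V]
    (Vc : ℤ → Submodule F V) (n₀ : ℤ) : Prop where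
  bot_of_lt : ∀ i : ℤ, i < n₀ → Vc i = ⊥
  internal : DirectSum.IsInternal Vc
  lie_mem : ∀ (i : ℤ) (j : ℕ), ∀ x ∈ Lc j, ∀ v ∈ Vc i, ⁅x, v⁆ ∈ Vc (i + j)

/-- `V` is just infinite-dimensional (in the strong sense): `V` is infinite-dimensional
over `F` and every nonzero `L`-submodule of `V` has finite codimension in `V`. -/
def IsJustInfiniteModule (F : Type*) [Field F] (L : Type*) [LieRing L] [LieAlgebra F L]
    (V : Type*) [AddCommGroup V] [Module F V] [LieRingModule L V] [LieModule F L V] : Prop :=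
  ¬ Module.Finite F V ∧
    ∀ W : LieSubmodule F L V, W ≠ ⊥ → Module.Finite F (V ⧸ (W : Submodule F V))

/-- The space `grend_{L,d}(V)` of graded `L`-endomorphisms of `V` of degree `d`. -/
def grend (F : Type*) [Field F] (L : Type*) [LieRing L] [LieAlgebra F L]
    (V : Type*) [AddCommGroup V] [Module F V] [LieRingModule L V] [LieModule F L V]
    (Vc : ℤ → Submodule F V) (d : ℕ) : Submodule F (V →ₗ[F] V) where
  carrier := {φ : V →ₗ[F] V |
    (∀ i : ℤ, ∀ v ∈ Vc i, φ v ∈ Vc (i + d)) ∧ ∀ (x : L) (v : V), φ ⁅x, v⁆ = ⁅x, φ v⁆}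
  add_mem' := by
    rintro φ ψ ⟨hφ1, hφ2⟩ ⟨hψ1, hψ2⟩
    refine ⟨fun i v hv => ?_, fun x v => ?_⟩
    · simpa using add_mem (hφ1 i v hv) (hψ1 i v hv)
    · simp [hφ2 x v, hψ2 x v]
  zero_mem' := ⟨fun i v hv => by simp, fun x v => by simp⟩
  smul_mem' := by
    rintro c φ ⟨hφ1, hφ2⟩
    refine ⟨fun i v hv => ?_, fun x v => ?_⟩
    · simpa using Submodule.smul_mem _ c (hφ1 i v hv)
    · simp [hφ2 x v, lie_smul]

private lemma finite_of_sub_quot {F V : Type*} [Field F] [AddCommGroup V] [Module F V]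
    (S : Submodule F V) (h1 : Module.Finite F S) (h2 : Module.Finite F (V ⧸ S)) :
    Module.Finite F V := by
  rw [Module.finite_def] at h2 ⊢
  rw [Module.Finite.iff_fg] at h1
  apply Submodule.fg_of_fg_map_of_fg_inf_ker (s := (⊤ : Submodule F V)) S.mkQ
  · rwa [Submodule.map_top, Submodule.range_mkQ]
  · rwa [top_inf_eq, Submodule.ker_mkQ]

/-- if moreover each `V_i` is finite-dimensional over `F`, then every
nonzero `φ ∈ grend_{L,0}(V)` is bijective with inverse again in `grend_{L,0}(V)`;
hence `grend_{L,0}(V)` is a division ring (closed under composition, containing the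
identity) containing the scalar multiplications by elements of `F` in its centre. -/
theorem stmt_16 (F : Type*) [Field F] (L : Type*) [LieRing L] [LieAlgebra F L]
    (Lc : ℕ → Submodule F L) (hL : IsGradedLieAlgebra F L Lc)
    (V : Type*) [AddCommGroup V] [Module F V] [LieRingModule L V] [LieModule F L V]
    (Vc : ℤ → Submodule F V) (n₀ : ℤ) (hV : IsGradedLieModule F L Lc V Vc n₀)
    (hJI : IsJustInfiniteModule F L V)
    (hfd : ∀ i : ℤ, Module.Finite F ↥(Vc i)) :
    (∀ φ ∈ grend F L V Vc 0, φ ≠ 0 → Function.Bijective φ ∧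
      ∃ ψ ∈ grend F L V Vc 0, ψ.comp φ = LinearMap.id ∧ φ.comp ψ = LinearMap.id) ∧
    (∀ φ ∈ grend F L V Vc 0, ∀ ψ ∈ grend F L V Vc 0, φ.comp ψ ∈ grend F L V Vc 0) ∧
    (LinearMap.id ∈ grend F L V Vc 0) ∧
    (∀ c : F, (c • LinearMap.id : V →ₗ[F] V) ∈ grend F L V Vc 0) ∧
    (∀ c : F, ∀ φ ∈ grend F L V Vc 0,
      φ.comp (c • LinearMap.id : V →ₗ[F] V) = (c • LinearMap.id : V →ₗ[F] V).comp φ) := by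

  obtain ⟨hJI1, hJI2⟩ := hJI
  have hsup : (⨆ i, Vc i) = (⊤ : Submodule F V) := hV.internal.submodule_iSup_eq_top
  -- main claim
  have main : ∀ φ ∈ grend F L V Vc 0, φ ≠ 0 → Function.Bijective φ ∧
      ∃ ψ ∈ grend F L V Vc 0, ψ.comp φ = LinearMap.id ∧ φ.comp ψ = LinearMap.id := by
    intro φ hφ hne
    obtain ⟨hφ1, hφ2⟩ := hφ
    have hφ1' : ∀ i : ℤ, ∀ v ∈ Vc i, φ v ∈ Vc i := by
      intro i v hv; simpa using hφ1 i v hv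
    -- kernel and range as Lie submodules
    set K : LieSubmodule F L V :=
      { LinearMap.ker φ with
        lie_mem := by
          intro x v hv
          have hv' : φ v = 0 := hv
          show φ ⁅x, v⁆ = 0
          rw [hφ2 x v, hv', lie_zero] } with hK
    set R : LieSubmodule F L V :=
      { LinearMap.range φ with
        lie_mem := by
          rintro x v ⟨w, rfl⟩
          exact ⟨⁅x, w⁆, hφ2 x w⟩ } with hR
    have hRne : R ≠ ⊥ := by
      intro h
      apply hne
      have : LinearMap.range φ = ⊥ := congrArg LieSubmodule.toSubmodule h
      exact LinearMap.range_eq_bot.mp this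
    -- injectivity
    have hinj : Function.Injective φ := by
      rw [← LinearMap.ker_eq_bot]
      by_contra hker
      have hKne : K ≠ ⊥ := by
        intro h; exact hker (congrArg LieSubmodule.toSubmodule h)
      have hq : Module.Finite F (V ⧸ (LinearMap.ker φ)) := hJI2 K hKne
      have hrfin : Module.Finite F (LinearMap.range φ) :=
        Module.Finite.equiv φ.quotKerEquivRange
      have hq2 : Module.Finite F (V ⧸ (LinearMap.range φ)) := hJI2 R hRne
      exact hJI1 (finite_of_sub_quot (LinearMap.range φ) hrfin hq2)
    -- surjectivity on each graded piece
    have hsurj_piece : ∀ i : ℤ, ∀ v ∈ Vc i, ∃ w ∈ Vc i, φ w = v := by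
      intro i v hv
      haveI : Module.Finite F ↥(Vc i) := hfd i
      set f : ↥(Vc i) →ₗ[F] ↥(Vc i) := φ.restrict (fun w hw => hφ1' i w hw) with hf
      have hfi : Function.Injective f := by
        intro a b hab
        have : φ a = φ b := congrArg Subtype.val hab
        exact Subtype.ext (hinj this)
      have hfs : Function.Surjective f := (LinearMap.injective_iff_surjective).mp hfi
      obtain ⟨w, hw⟩ := hfs ⟨v, hv⟩
      exact ⟨w, w.2, congrArg Subtype.val hw⟩
    have hsurj : Function.Surjective φ := by
      rw [← LinearMap.range_eq_top]
      rw [eq_top_iff, ← hsup]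
      apply iSup_le
      intro i v hv
      obtain ⟨w, _, hw⟩ := hsurj_piece i v hv
      exact ⟨w, hw⟩
    have hbij : Function.Bijective φ := ⟨hinj, hsurj⟩
    refine ⟨hbij, ?_⟩
    set e : V ≃ₗ[F] V := LinearEquiv.ofBijective φ hbij with he
    have heφ : ∀ v, e v = φ v := fun v => rfl
    refine ⟨e.symm.toLinearMap, ⟨?_, ?_⟩, ?_, ?_⟩
    · -- graded of degree 0
      intro i v hv
      obtain ⟨w, hw, hfw⟩ := hsurj_piece i v hv
      have : e.symm v = w := by
        apply e.injective
        rw [e.apply_symm_apply]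
        exact (heφ w).symm ▸ hfw.symm ▸ rfl
      show e.symm v ∈ Vc (i + (0:ℕ))
      simpa [this] using hw
    · -- commutes with L
      intro x v
      apply hinj
      show φ (e.symm ⁅x, v⁆) = φ ⁅x, e.symm v⁆
      rw [hφ2 x (e.symm v)]
      have h1 : φ (e.symm ⁅x, v⁆) = ⁅x, v⁆ := e.apply_symm_apply ⁅x, v⁆
      have h2 : φ (e.symm v) = v := e.apply_symm_apply v
      rw [h1, h2]
    · ext v; exact e.symm_apply_apply v
    · ext v; exact e.apply_symm_apply v
  refine ⟨main, ?_, ?_, ?_, ?_⟩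
  · rintro φ ⟨hφ1, hφ2⟩ ψ ⟨hψ1, hψ2⟩
    refine ⟨fun i v hv => ?_, fun x v => ?_⟩
    · have h1 := hψ1 i v hv
      have h2 := hφ1 (i + (0:ℕ)) _ h1
      simpa using h2
    · simp [LinearMap.comp_apply, hψ2 x v, hφ2 x (ψ v)]
  · exact ⟨fun i v hv => by simpa using hv, fun x v => rfl⟩
  · intro c
    refine ⟨fun i v hv => ?_, fun x v => ?_⟩
    · simpa using Submodule.smul_mem _ c hv
    · simp
  · intro c φ hφ
    ext v
    simp
end

section
/- L is solvable if and only if there exists a nonzero graded ideal I of L whose centraliser C_L(I) = {x ∈ L : ⁅x, u⁆ = 0 for all u ∈ I} is nonzero. -/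
open Submodule

/-- A Lie ideal `I` of `L` is graded if `I = ⊕_{i ≥ 1} (I ∩ L_i)`. -/
def IsGradedIdeal (F : Type*) [Field F] {L : Type*} [LieRing L] [LieAlgebra F L]
    (Lc : ℕ → Submodule F L) (I : LieIdeal F L) : Prop :=
  (I : Submodule F L) = ⨆ i : ℕ, ⨆ _ : 1 ≤ i, ((I : Submodule F L) ⊓ Lc i)

/-!
If `L` is solvable, the last nonzero term of its derived series is a graded abelian ideal, so it
lies in its own centraliser. Conversely, let `I ≠ 0` be graded with `C = C_L(I) ≠ 0` (in Lean,
`C_L(I)` is `LieModule.ker F L I`, the kernel of the action of `L` on `I`). Then `C` is graded,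
and so is the abelian ideal `J = I ∩ C`. If `J` were zero, `C` would embed into the
finite-dimensional `L / I`, making `L` finite-dimensional; so `L / J` is finite-dimensional, and
as `J` is graded this forces `L_i ⊆ J` for all `i > N`, for some `N`. Since
`γ_N(L) ⊆ ⊕_{i > N} L_i ⊆ J`, also `L^(N) ⊆ J`, hence `L^(N+1) ⊆ ⁅J, J⁆ = 0`.
-/

open DirectSum

namespace Submodule

section Semiring

variable {ι R M : Type*} [DecidableEq ι] [Semiring R] [AddCommMonoid M] [Module R M]
  (ℳ : ι → Submodule R M) [Decomposition ℳ]

theorem isHomogeneous_iff_eq_iSup_inf {p : Submodule R M} :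
    p.IsHomogeneous ℳ ↔ p = ⨆ i, p ⊓ ℳ i := by
  classical
  constructor
  · intro hp
    refine le_antisymm (fun x hx => ?_) (iSup_le fun i => inf_le_left)
    rw [← sum_support_decompose ℳ x]
    exact sum_mem fun i _ => mem_iSup_of_mem i ⟨hp i hx, SetLike.coe_mem _⟩
  · intro hp i x hx
    rw [hp] at hx
    refine iSup_induction _ (motive := fun x => (decompose ℳ x i : M) ∈ p) hx ?_ ?_ ?_
    · intro j y hy
      obtain rfl | hji := eq_or_ne j i
      · rw [decompose_of_mem_same ℳ hy.2]; exact hy.1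
      · rw [decompose_of_mem_ne ℳ hy.2 hji]; exact p.zero_mem
    · rw [decompose_zero]; exact p.zero_mem
    · intro y z hy hz
      rw [decompose_add, DirectSum.add_apply, coe_add]; exact p.add_mem hy hz

theorem decompose_eq_zero_of_mem_iSup_ne {i : ι} {x : M} (hx : x ∈ ⨆ (j) (_ : j ≠ i), ℳ j) :
    decompose ℳ x i = 0 := by
  let π : M →ₗ[R] ℳ i := component R ι (fun j => ℳ j) i ∘ₗ (decomposeLinearEquiv ℳ).toLinearMap
  have : (⨆ (j) (_ : j ≠ i), ℳ j) ≤ LinearMap.ker π :=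
    iSup₂_le fun j hji y hy => by
      rw [LinearMap.mem_ker, LinearMap.comp_apply, ← apply_eq_component]
      exact Subtype.ext (decompose_of_mem_ne ℳ hy hji)
  exact (apply_eq_component R _ i).trans (this hx)

end Semiring

section DivisionRing

variable {ι K V : Type*} [DecidableEq ι] [DivisionRing K] [AddCommGroup V] [Module K V]
  {ℳ : ι → Submodule K V} [Decomposition ℳ] {p : Submodule K V}

theorem IsHomogeneous.iSupIndep_map_mkQ (hp : p.IsHomogeneous ℳ) :
    iSupIndep fun i => (ℳ i).map p.mkQ := by
  refine iSupIndep_def.mpr fun i => disjoint_def.mpr ?_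
  rintro _ ⟨y, hy, rfl⟩ hrest
  simp_rw [← map_iSup] at hrest
  obtain ⟨v, hv, hvy⟩ := hrest
  have hyv : y - v ∈ p := (Quotient.eq p).mp hvy.symm
  have := hp i hyv
  rw [decompose_sub, DirectSum.sub_apply, AddSubgroupClass.coe_sub, decompose_of_mem_same ℳ hy,
    decompose_eq_zero_of_mem_iSup_ne ℳ hv, ZeroMemClass.coe_zero, sub_zero] at this
  exact (Quotient.mk_eq_zero p).mpr this

theorem IsHomogeneous.finite_setOf_not_le [Module.Finite K (V ⧸ p)] (hp : p.IsHomogeneous ℳ) :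
    {i | ¬ ℳ i ≤ p}.Finite := by
  have := hp.iSupIndep_map_mkQ.fintypeNeBotOfFiniteDimensional
  have hne : {i | ¬ ℳ i ≤ p} = {i | (ℳ i).map p.mkQ ≠ ⊥} := by
    ext i
    change ¬ _ ↔ ¬ _
    rw [← le_bot_iff, map_le_iff_le_comap, comap_bot, ker_mkQ]
  rw [hne]
  exact Set.finite_coe_iff.mp (Finite.of_fintype { i // (ℳ i).map p.mkQ ≠ ⊥ })

end DivisionRing

end Submodule

theorem Module.Finite.of_finite_quotient_of_inf_eq_bot {K V : Type*} [DivisionRing K]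
    [AddCommGroup V] [Module K V] {p q : Submodule K V} [Module.Finite K (V ⧸ p)]
    [Module.Finite K (V ⧸ q)] (h : p ⊓ q = ⊥) : Module.Finite K V :=
  .of_injective (p.mkQ.prod q.mkQ) <| LinearMap.ker_eq_bot.mp <| by
    rw [LinearMap.ker_prod, ker_mkQ, ker_mkQ, h]

theorem iSup_ge_one_eq_iSup {α : Type*} [CompleteLattice α] (f : ℕ → α) (h0 : f 0 = ⊥) :
    ⨆ (i) (_ : 1 ≤ i), f i = ⨆ i, f i := by
  refine le_antisymm (iSup₂_le fun i _ => le_iSup f i) (iSup_le fun i => ?_)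
  rcases i with _ | i
  · rw [h0]; exact bot_le
  · exact le_iSup₂_of_le (i + 1) (by omega) le_rfl

theorem LieAlgebra.isSolvable_of_lowerCentralSeries_le {R L : Type*} [CommRing R] [LieRing L]
    [LieAlgebra R L] {J : LieIdeal R L} [IsLieAbelian J] {n : ℕ}
    (h : LieModule.lowerCentralSeries R L L n ≤ J) : IsSolvable L := by
  have hD : derivedSeries R L n ≤ J := (LieModule.derivedSeries_le_lowerCentralSeries R L n).trans h
  refine (isSolvable_iff R L).mpr ⟨n + 1, le_bot_iff.mp ?_⟩
  rw [derivedSeries_def, derivedSeriesOfIdeal_succ, ← derivedSeries_def]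
  exact (LieSubmodule.mono_lie hD hD).trans
    ((LieSubmodule.lie_abelian_iff_lie_self_eq_bot J).mp ‹_›).le

instance LieIdeal.isLieAbelian_inf_ker {R L : Type*} [CommRing R] [LieRing L] [LieAlgebra R L]
    (I : LieIdeal R L) : IsLieAbelian ↥(I ⊓ LieModule.ker R L I) := by
  rw [LieSubmodule.lie_abelian_iff_lie_self_eq_bot, LieSubmodule.lie_eq_bot_iff]
  intro x hx u hu
  exact congrArg Subtype.val ((LieModule.mem_ker R L I x).mp hx.2 ⟨u, hu.1⟩)

def IsLieGrading {ι R L : Type*} [Add ι] [CommRing R] [LieRing L] [LieAlgebra R L]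
    (ℳ : ι → Submodule R L) : Prop :=
  ∀ ⦃i j : ι⦄ ⦃x y : L⦄, x ∈ ℳ i → y ∈ ℳ j → ⁅x, y⁆ ∈ ℳ (i + j)

namespace IsLieGrading

section CommRing

variable {ι R L : Type*} [CommRing R] [LieRing L] [LieAlgebra R L] {ℳ : ι → Submodule R L}

theorem lie_mem_iSup_ge [Add ι] [Preorder ι] [AddLeftMono ι] [AddRightMono ι]
    (hℳ : IsLieGrading ℳ) {a b : ι} {x y : L}
    (hx : x ∈ ⨆ (i) (_ : a ≤ i), ℳ i) (hy : y ∈ ⨆ (j) (_ : b ≤ j), ℳ j) :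
    ⁅x, y⁆ ∈ ⨆ (k) (_ : a + b ≤ k), ℳ k := by
  let β : L →ₗ[R] L →ₗ[R] L := (LieModule.toEnd R L L : L →ₗ[R] Module.End R L)
  suffices (⨆ (i) (_ : a ≤ i), ℳ i) ≤ (⨆ (k) (_ : a + b ≤ k), ℳ k).comap (β.flip y) from this hx
  refine iSup₂_le fun i hi x hx => ?_
  suffices (⨆ (j) (_ : b ≤ j), ℳ j) ≤ (⨆ (k) (_ : a + b ≤ k), ℳ k).comap (β x) from this hy
  exact iSup₂_le fun j hj y hy =>
    mem_iSup_of_mem (i + j) (mem_iSup_of_mem (add_le_add hi hj) (hℳ hx hy))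

variable [DecidableEq ι] [Decomposition ℳ]

theorem decompose_lie_of_mem [Add ι] [IsRightCancelAdd ι] (hℳ : IsLieGrading ℳ) {j : ι} {u : L}
    (hu : u ∈ ℳ j) (z : L) (i : ι) :
    (decompose ℳ ⁅z, u⁆ (i + j) : L) = ⁅(decompose ℳ z i : L), u⁆ := by
  induction z using Decomposition.inductionOn ℳ with
  | zero => simp
  | @homogeneous k z =>
    obtain rfl | hki := eq_or_ne k i
    · rw [decompose_of_mem_same ℳ z.2, decompose_of_mem_same ℳ (hℳ z.2 hu)]
    · rw [decompose_of_mem_ne ℳ z.2 hki, decompose_of_mem_ne ℳ (hℳ z.2 hu)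
        ((add_left_injective j).ne hki), zero_lie]
  | add z z' hz hz' => rw [add_lie, decompose_add, DirectSum.add_apply, coe_add, hz, hz',
      decompose_add, DirectSum.add_apply, coe_add, add_lie]

theorem isHomogeneous_lie [Add ι] (hℳ : IsLieGrading ℳ) {I J : LieIdeal R L}
    (hI : I.toSubmodule.IsHomogeneous ℳ) (hJ : J.toSubmodule.IsHomogeneous ℳ) :
    (⁅I, J⁆ : LieIdeal R L).toSubmodule.IsHomogeneous ℳ := by
  classical
  refine (isHomogeneous_iff_eq_iSup_inf ℳ).mpr <|
    le_antisymm ?_ (iSup_le fun _ => inf_le_left)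
  conv_lhs => rw [LieSubmodule.lieIdeal_oper_eq_linear_span']
  rw [span_le]
  rintro _ ⟨x, hx, y, hy, rfl⟩
  rw [← sum_support_decompose ℳ x, ← sum_support_decompose ℳ y, sum_lie]
  refine sum_mem fun i _ => ?_
  rw [lie_sum]
  refine sum_mem fun j _ => mem_iSup_of_mem (i + j) ⟨?_, ?_⟩
  · exact LieSubmodule.lie_mem_lie (hI i hx) (hJ j hy)
  · exact hℳ (SetLike.coe_mem _) (SetLike.coe_mem _)

theorem isHomogeneous_derivedSeriesOfIdeal [Add ι] (hℳ : IsLieGrading ℳ) {I : LieIdeal R L}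
    (hI : I.toSubmodule.IsHomogeneous ℳ) (k : ℕ) :
    (LieAlgebra.derivedSeriesOfIdeal R L k I).toSubmodule.IsHomogeneous ℳ := by
  induction k with
  | zero => exact hI
  | succ k ih =>
    rw [LieAlgebra.derivedSeriesOfIdeal_succ]
    exact isHomogeneous_lie hℳ ih ih

theorem isHomogeneous_derivedAbelianOfIdeal [Add ι] (hℳ : IsLieGrading ℳ) {I : LieIdeal R L}
    (hI : I.toSubmodule.IsHomogeneous ℳ) :
    (LieAlgebra.derivedAbelianOfIdeal I).toSubmodule.IsHomogeneous ℳ := by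
  unfold LieAlgebra.derivedAbelianOfIdeal
  split
  · intro i x hx
    rw [(LieSubmodule.mem_bot x).mp hx, decompose_zero]
    exact zero_mem _
  · exact isHomogeneous_derivedSeriesOfIdeal hℳ hI _

theorem isHomogeneous_ker [Add ι] [IsRightCancelAdd ι] (hℳ : IsLieGrading ℳ) {I : LieIdeal R L}
    (hI : I.toSubmodule.IsHomogeneous ℳ) :
    (LieModule.ker R L I).toSubmodule.IsHomogeneous ℳ := by
  classical
  intro i z hz
  rw [LieSubmodule.mem_toSubmodule, LieModule.mem_ker] at hz ⊢
  rintro ⟨u, hu⟩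
  have hcomp : ∀ j, ⁅(decompose ℳ z i : L), (decompose ℳ u j : L)⁆ = 0 := fun j => by
    rw [← decompose_lie_of_mem hℳ (SetLike.coe_mem _) z i,
      show ⁅z, (decompose ℳ u j : L)⁆ = 0 from congrArg Subtype.val (hz ⟨_, hI j hu⟩),
      decompose_zero, DirectSum.zero_apply, ZeroMemClass.coe_zero]
  refine Subtype.ext ?_
  change ⁅(decompose ℳ z i : L), u⁆ = 0
  rw [← sum_support_decompose ℳ u, lie_sum]
  exact Finset.sum_eq_zero fun j _ => hcomp j

theorem lowerCentralSeries_le_iSup_ge {ℳ : ℕ → Submodule R L} [Decomposition ℳ]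
    (hℳ : IsLieGrading ℳ) (h0 : ℳ 0 = ⊥) (n : ℕ) :
    (LieModule.lowerCentralSeries R L L n).toSubmodule ≤ ⨆ (i) (_ : n + 1 ≤ i), ℳ i := by
  have htop : ⊤ ≤ ⨆ (i) (_ : 1 ≤ i), ℳ i := by
    rw [iSup_ge_one_eq_iSup ℳ h0, (Decomposition.isInternal ℳ).submodule_iSup_eq_top]
  induction n with
  | zero => exact htop
  | succ n ih =>
    rw [LieModule.lowerCentralSeries_succ, LieSubmodule.lieIdeal_oper_eq_linear_span', span_le]
    rintro _ ⟨x, -, m, hm, rfl⟩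
    have := lie_mem_iSup_ge hℳ (htop (mem_top (x := x))) (ih hm)
    rwa [add_comm 1] at this

end CommRing

variable {F L : Type*} [Field F] [LieRing L] [LieAlgebra F L] {ℳ : ℕ → Submodule F L}
  [Decomposition ℳ]

theorem isSolvable_of_ker_ne_bot (hℳ : IsLieGrading ℳ) (h0 : ℳ 0 = ⊥)
    (hinf : ¬ Module.Finite F L)
    (hJI : ∀ I : LieIdeal F L, I.toSubmodule.IsHomogeneous ℳ → I ≠ ⊥ →
      Module.Finite F (L ⧸ I.toSubmodule))
    {I : LieIdeal F L} (hI : I.toSubmodule.IsHomogeneous ℳ) (hI0 : I ≠ ⊥)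
    (hC : LieModule.ker F L I ≠ ⊥) : LieAlgebra.IsSolvable L := by
  set J := I ⊓ LieModule.ker F L I
  have hChom := isHomogeneous_ker hℳ hI
  have hJhom : J.toSubmodule.IsHomogeneous ℳ := fun i _ hx => ⟨hI i hx.1, hChom i hx.2⟩
  have hJ0 : J ≠ ⊥ := fun hJ => hinf <| by
    have := hJI I hI hI0
    have := hJI (LieModule.ker F L I) hChom hC
    have hIC : I.toSubmodule ⊓ (LieModule.ker F L I).toSubmodule = ⊥ := by
      rwa [← LieSubmodule.inf_toSubmodule, LieSubmodule.toSubmodule_eq_bot]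
    exact .of_finite_quotient_of_inf_eq_bot hIC
  have := hJI J hJhom hJ0
  obtain ⟨N, hN⟩ := hJhom.finite_setOf_not_le.bddAbove
  refine LieAlgebra.isSolvable_of_lowerCentralSeries_le (J := J) (n := N) ?_
  rw [← LieSubmodule.toSubmodule_le_toSubmodule]
  refine (lowerCentralSeries_le_iSup_ge hℳ h0 N).trans (iSup₂_le fun i hi => ?_)
  by_contra h
  exact absurd (hN h) (by omega)

end IsLieGrading

theorem isGradedIdeal_iff_isHomogeneous {F L : Type*} [Field F] [LieRing L] [LieAlgebra F L]
    {Lc : ℕ → Submodule F L} [Decomposition Lc] (h0 : Lc 0 = ⊥) (I : LieIdeal F L) :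
    IsGradedIdeal F Lc I ↔ I.toSubmodule.IsHomogeneous Lc := by
  rw [isHomogeneous_iff_eq_iSup_inf, IsGradedIdeal,
    iSup_ge_one_eq_iSup _ (by rw [h0, inf_bot_eq])]
  exact Iff.rfl

/-- if `L` is just infinite-dimensional, then `L` is solvable if and only
if there is a nonzero graded ideal `I` of `L` whose centraliser `C_L(I)` is nonzero. -/
theorem stmt_18 (F : Type*) [Field F] (L : Type*) [LieRing L] [LieAlgebra F L]
    (Lc : ℕ → Submodule F L) (hL : IsGradedLieAlgebra F L Lc)
    (hinf : ¬ Module.Finite F L)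
    (hJI : ∀ I : LieIdeal F L, IsGradedIdeal F Lc I → I ≠ ⊥ →
      Module.Finite F (L ⧸ (I : Submodule F L))) :
    LieAlgebra.IsSolvable L ↔
      ∃ I : LieIdeal F L, IsGradedIdeal F Lc I ∧ I ≠ ⊥ ∧
        ∃ x : L, x ≠ 0 ∧ ∀ u ∈ I, ⁅x, u⁆ = 0 := by
  let := hL.internal.chooseDecomposition
  have hℳ : IsLieGrading Lc := fun i j x y hx hy => hL.lie_mem i j x hx y hy
  have hgr := isGradedIdeal_iff_isHomogeneous hL.zero_bot
  have : Nontrivial L := not_subsingleton_iff_nontrivial.mp fun _ => hinf inferInstance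
  constructor
  · intro hsolv
    set A := LieAlgebra.derivedAbelianOfIdeal (⊤ : LieIdeal F L)
    have hA0 : A ≠ ⊥ := (LieAlgebra.abelian_of_solvable_ideal_eq_bot_iff ⊤).not.mpr top_ne_bot
    obtain ⟨x, hx, hx0⟩ : ∃ x ∈ A, x ≠ 0 := by simpa [LieSubmodule.eq_bot_iff] using hA0
    refine ⟨A, (hgr A).mpr (hℳ.isHomogeneous_derivedAbelianOfIdeal fun _ _ _ => trivial), hA0,
      x, hx0, fun u hu => ?_⟩
    exact (LieSubmodule.lie_eq_bot_iff _ _).mp ((LieSubmodule.lie_abelian_iff_lie_self_eq_bot A).mp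
      (LieAlgebra.abelian_derivedAbelianOfIdeal ⊤)) x hx u hu
  · rintro ⟨I, hI, hI0, x, hx0, hx⟩
    refine hℳ.isSolvable_of_ker_ne_bot hL.zero_bot hinf (fun J hJ => hJI J ((hgr J).mpr hJ))
      ((hgr I).mp hI) hI0 fun hC => hx0 ((LieSubmodule.eq_bot_iff _).mp hC x ?_)
    exact (LieModule.mem_ker F L I x).mpr fun u => Subtype.ext (hx u u.2)
end
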